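/- arXiv:1901.10109 — 4 statements merged into one kernel-verified Lean document; each statement's English description precedes it below -/
import Mathlib

section
/- (Threshold-based greedy guarantee, unfilled case.) Let f : 2^E → ℝ≥0 be monotone submodular with f(∅)=0, let k ≥ 1, and let OPT = max_{|S| ≤ k} f(S), attained at S*. Suppose S ⊆ E with |S| ≤ k satisfies Δ(e|S) < φ/(2k) for every e ∈ S* \ S, where φ ≤ OPT. Then f(S) ≥ OPT/2. -/
theorem submodular_union_sum_aux
    {E : Type*} [DecidableEq E]
    (f : Finset E → ℝ)
    (hsub : ∀ (S T : Finset E) (e : E), S ⊆ T → e ∉ T →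
      f (insert e T) - f T ≤ f (insert e S) - f S)
    (B : Finset E) :
    ∀ A : Finset E, f (A ∪ B) - f B ≤ ∑ e ∈ A \ B, (f (insert e B) - f B) := by
  intro A
  induction A using Finset.induction_on with
  | empty => simp
  | @insert a A ha ih =>
    by_cases hb : a ∈ B
    · have h1 : insert a A ∪ B = A ∪ B := by
        rw [Finset.insert_union, Finset.insert_eq_self.mpr (Finset.mem_union_right A hb)]
      have h2 : (insert a A) \ B = A \ B := by
        rw [Finset.insert_sdiff_of_mem _ hb]
      rw [h1, h2]; exact ih
    · have haAB : a ∉ A ∪ B := by simp [ha, hb]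
      have h2 : (insert a A) \ B = insert a (A \ B) := Finset.insert_sdiff_of_notMem _ hb
      have haAb : a ∉ A \ B := by simp [ha]
      rw [h2, Finset.sum_insert haAb, Finset.insert_union]
      have := hsub B (A ∪ B) a (Finset.subset_union_right) haAB
      linarith [ih]

/-- Threshold-based greedy guarantee, unfilled case. If every
element of `S* \ S` has marginal gain below `φ/(2k)` with `φ ≤ OPT`, then
`f(S) ≥ OPT/2`. -/
theorem threshold_greedy_unfilled_case
    {E : Type*} [DecidableEq E]
    (f : Finset E → ℝ) (k : ℕ) (φ OPT : ℝ)
    (hk : 1 ≤ k)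
    (hnonneg : ∀ S, 0 ≤ f S)
    (hempty : f ∅ = 0)
    (hmono : ∀ (S : Finset E) (e : E), f S ≤ f (insert e S))
    (hsub : ∀ (S T : Finset E) (e : E), S ⊆ T → e ∉ T →
      f (insert e T) - f T ≤ f (insert e S) - f S)
    (Sstar : Finset E)
    (hSstar_card : Sstar.card ≤ k)
    (hSstar_opt : f Sstar = OPT)
    (hOPT_ub : ∀ T : Finset E, T.card ≤ k → f T ≤ OPT)
    (hφ : φ ≤ OPT)
    (S : Finset E) (hS_card : S.card ≤ k)
    (hgain : ∀ e ∈ Sstar \ S, f (insert e S) - f S < φ / (2 * k)) :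
    f S ≥ OPT / 2 := by
  -- monotonicity in subset form: f S* ≤ f (S* ∪ S)
  have hmono_union : ∀ A B : Finset E, f B ≤ f (A ∪ B) := by
    intro A B
    induction A using Finset.induction_on with
    | empty => simp
    | @insert a A ha ih =>
      rw [Finset.insert_union]
      exact le_trans ih (hmono _ _)
  have hOPTnn : 0 ≤ OPT := hSstar_opt ▸ hnonneg Sstar
  have hsum := submodular_union_sum_aux f hsub S Sstar
  have hstar_le : OPT ≤ f (Sstar ∪ S) := by
    rw [← hSstar_opt]
    calc f Sstar ≤ f (S ∪ Sstar) := hmono_union S Sstar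
      _ = f (Sstar ∪ S) := by rw [Finset.union_comm]
  rcases (Sstar \ S).eq_empty_or_nonempty with he | hne
  · have : Sstar ⊆ S := Finset.sdiff_eq_empty_iff_subset.mp he
    have : Sstar ∪ S = S := Finset.union_eq_right.mpr this
    rw [this] at hstar_le
    linarith
  · have hcard : ((Sstar \ S).card : ℝ) ≤ k := by
      exact_mod_cast le_trans (Finset.card_le_card (Finset.sdiff_subset)) hSstar_card
    have hsum_lt : ∑ e ∈ Sstar \ S, (f (insert e S) - f S)
        < ∑ e ∈ Sstar \ S, (φ / (2 * k)) :=
      Finset.sum_lt_sum_of_nonempty hne (fun e he => hgain e he)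
    rw [Finset.sum_const, nsmul_eq_mul] at hsum_lt
    -- φ/(2k) > 0 since some nonneg gain is below it
    obtain ⟨e0, he0⟩ := hne
    have hgain0 : 0 ≤ f (insert e0 S) - f S := by linarith [hmono S e0]
    have hpos : 0 < φ / (2 * k) := lt_of_le_of_lt hgain0 (hgain e0 he0)
    have hcard_mul : ((Sstar \ S).card : ℝ) * (φ / (2 * k)) ≤ k * (φ / (2 * k)) :=
      mul_le_mul_of_nonneg_right hcard (le_of_lt hpos)
    have hkpos : (0:ℝ) < k := by exact_mod_cast hk
    have hkey : (k:ℝ) * (φ / (2 * k)) = φ / 2 := by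
      field_simp
    linarith [hsum, hstar_le, hsum_lt, hcard_mul, hkey ▸ hcard_mul]
end

section
/- (Descending-threshold greedy, one-step recursion.) Let f : 2^E → ℝ≥0 be monotone submodular with f(∅)=0, S* an optimal solution of size at most k with value OPT, and S_j a current set with |S_j| < k. Suppose element e_{j+1} ∉ S_j satisfies Δ(e_{j+1}|S_j) ≥ (1−ε)·Δ(e|S_j) for all e ∈ S* \ S_j, where ε ∈ (0,1). Then f(S_j ∪ {e_{j+1}}) − f(S_j) ≥ ((1−ε)/k)·(OPT − f(S_j)). -/
lemma mono_union_aux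
    {E : Type*} [DecidableEq E]
    (f : Finset E → ℝ)
    (hmono : ∀ (S : Finset E) (e : E), f S ≤ f (insert e S))
    (S T : Finset E) : f S ≤ f (S ∪ T) := by
  classical
  induction T using Finset.induction_on with
  | empty => simp
  | @insert a T ha ih =>
    have h2 : S ∪ insert a T = insert a (S ∪ T) := by
      ext x; simp [or_left_comm, or_comm]
    rw [h2]
    exact le_trans ih (hmono _ _)

lemma sum_marginal_bound
    {E : Type*} [DecidableEq E]
    (f : Finset E → ℝ)
    (hmono : ∀ (S : Finset E) (e : E), f S ≤ f (insert e S))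
    (hsub : ∀ (S T : Finset E) (e : E), S ⊆ T → e ∉ T →
      f (insert e T) - f T ≤ f (insert e S) - f S)
    (S T : Finset E) :
    f (S ∪ T) - f S ≤ ∑ e ∈ T, (f (insert e S) - f S) := by
  classical
  induction T using Finset.induction_on with
  | empty => simp
  | @insert a T ha ih =>
    rw [Finset.sum_insert ha]
    have key : f (insert a (S ∪ T)) - f (S ∪ T) ≤ f (insert a S) - f S := by
      by_cases haST : a ∈ S ∪ T
      · have haS : a ∈ S := by
          rcases Finset.mem_union.mp haST with h | h
          · exact h
          · exact absurd h ha
        rw [Finset.insert_eq_self.mpr haST, Finset.insert_eq_self.mpr haS]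
        simp
      · exact hsub S (S ∪ T) a Finset.subset_union_left haST
    have h2 : S ∪ insert a T = insert a (S ∪ T) := by
      ext x; simp [or_left_comm, or_comm]
    rw [h2]
    linarith

/-- Descending-threshold greedy, one-step recursion. -/
theorem descending_threshold_one_step
    {E : Type*} [DecidableEq E]
    (f : Finset E → ℝ) (k : ℕ) (ε OPT : ℝ)
    (hk : 1 ≤ k) (hε : 0 < ε) (hε1 : ε < 1)
    (hnonneg : ∀ S, 0 ≤ f S)
    (hempty : f ∅ = 0)
    (hmono : ∀ (S : Finset E) (e : E), f S ≤ f (insert e S))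
    (hsub : ∀ (S T : Finset E) (e : E), S ⊆ T → e ∉ T →
      f (insert e T) - f T ≤ f (insert e S) - f S)
    (Sstar : Finset E)
    (hSstar_card : Sstar.card ≤ k)
    (hSstar_opt : f Sstar = OPT)
    (Sj : Finset E) (hSj_card : Sj.card < k)
    (enext : E) (henext : enext ∉ Sj)
    (hgain : ∀ e ∈ Sstar \ Sj,
      f (insert enext Sj) - f Sj ≥ (1 - ε) * (f (insert e Sj) - f Sj)) :
    f (insert enext Sj) - f Sj ≥ ((1 - ε) / k) * (OPT - f Sj) := by
  classical
  set Δ := f (insert enext Sj) - f Sj with hΔ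
  have hΔ0 : 0 ≤ Δ := by have := hmono Sj enext; linarith
  have h1ε : (0:ℝ) < 1 - ε := by linarith
  have hk0 : (0:ℝ) < (k:ℝ) := by exact_mod_cast Nat.lt_of_lt_of_le Nat.zero_lt_one hk
  -- OPT ≤ f (Sstar ∪ Sj)
  have hOPT : OPT ≤ f (Sj ∪ Sstar) := by
    rw [Finset.union_comm]
    rw [← hSstar_opt]
    exact mono_union_aux f hmono Sstar Sj
  have hsum := sum_marginal_bound f hmono hsub Sj Sstar
  -- each term bounded by Δ / (1 - ε)
  have hterm : ∀ e ∈ Sstar, f (insert e Sj) - f Sj ≤ Δ / (1 - ε) := by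
    intro e he
    by_cases heSj : e ∈ Sj
    · rw [Finset.insert_eq_self.mpr heSj]
      simp only [sub_self]
      positivity
    · have := hgain e (Finset.mem_sdiff.mpr ⟨he, heSj⟩)
      rw [le_div_iff₀ h1ε, mul_comm]
      linarith
  have hsum2 : ∑ e ∈ Sstar, (f (insert e Sj) - f Sj) ≤ (Sstar.card : ℝ) * (Δ / (1 - ε)) := by
    calc ∑ e ∈ Sstar, (f (insert e Sj) - f Sj)
        ≤ ∑ _e ∈ Sstar, (Δ / (1 - ε)) := Finset.sum_le_sum hterm
      _ = (Sstar.card : ℝ) * (Δ / (1 - ε)) := by rw [Finset.sum_const, nsmul_eq_mul]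
  have hcard : (Sstar.card : ℝ) ≤ (k : ℝ) := by exact_mod_cast hSstar_card
  have hΔε : 0 ≤ Δ / (1 - ε) := by positivity
  have hfinal : OPT - f Sj ≤ (k : ℝ) * (Δ / (1 - ε)) := by
    calc OPT - f Sj ≤ f (Sj ∪ Sstar) - f Sj := by linarith
      _ ≤ ∑ e ∈ Sstar, (f (insert e Sj) - f Sj) := hsum
      _ ≤ (Sstar.card : ℝ) * (Δ / (1 - ε)) := hsum2
      _ ≤ (k : ℝ) * (Δ / (1 - ε)) := by nlinarith
  rw [ge_iff_le, div_mul_eq_mul_div, div_le_iff₀ hk0]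
  calc (1 - ε) * (OPT - f Sj) ≤ (1 - ε) * ((k : ℝ) * (Δ / (1 - ε))) := by nlinarith
    _ = Δ * (k : ℝ) := by field_simp
end

section
/- (Descending-threshold greedy, full case.) Let f : 2^E → ℝ≥0 be monotone submodular with f(∅)=0, k ≥ 1, ε ∈ (0,1), and OPT = max_{|S| ≤ k} f(S). Suppose S_k = {e_1,…,e_k} is built such that for each j ∈ {0,…,k−1}, f(S_{j+1}) − f(S_j) ≥ ((1−ε)/k)·(OPT − f(S_j)), where S_j = {e_1,…,e_j}. Then f(S_k) ≥ (1 − (1 − (1−ε)/k)^k)·OPT ≥ (1 − e^{−(1−ε)})·OPT ≥ (1 − 1/e − ε)·OPT. -/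
/-- Descending-threshold greedy, full case. Iterating the
one-step recursion `k` times yields
`f(S_k) ≥ (1 − (1 − (1−ε)/k)^k)·OPT ≥ (1 − e^{−(1−ε)})·OPT ≥ (1 − 1/e − ε)·OPT`. -/
theorem descending_threshold_full_case
    {E : Type*} [DecidableEq E]
    (f : Finset E → ℝ) (k : ℕ) (ε OPT : ℝ)
    (hk : 1 ≤ k) (hε : 0 < ε) (hε1 : ε < 1)
    (hnonneg : ∀ S, 0 ≤ f S)
    (hempty : f ∅ = 0)
    (hOPT_ub : ∀ T : Finset E, T.card ≤ k → f T ≤ OPT)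
    (hOPT_ex : ∃ T : Finset E, T.card ≤ k ∧ f T = OPT)
    (S : ℕ → Finset E)
    (hS0 : S 0 = ∅)
    (hrec : ∀ j < k,
      f (S (j + 1)) - f (S j) ≥ ((1 - ε) / k) * (OPT - f (S j))) :
    f (S k) ≥ (1 - (1 - (1 - ε) / k) ^ k) * OPT ∧
    (1 - (1 - (1 - ε) / k) ^ k) * OPT ≥ (1 - Real.exp (-(1 - ε))) * OPT ∧
    (1 - Real.exp (-(1 - ε))) * OPT ≥ (1 - 1 / Real.exp 1 - ε) * OPT := by
  have hkpos : (0:ℝ) < k := by exact_mod_cast hk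
  have hOPT0 : 0 ≤ OPT := by
    have := hOPT_ub ∅ (by simp)
    linarith [hempty ▸ this]
  have ha : 0 < 1 - ε := by linarith
  have hdiv0 : 0 ≤ (1 - ε) / k := le_of_lt (div_pos ha hkpos)
  have hdiv1 : (1 - ε) / k ≤ 1 := by
    rw [div_le_one hkpos]
    have : (1:ℝ) ≤ k := by exact_mod_cast hk
    linarith
  have hr0 : 0 ≤ 1 - (1 - ε) / k := by linarith
  -- induction: OPT - f (S j) ≤ r^j * OPT for j ≤ k
  have key : ∀ j ≤ k, OPT - f (S j) ≤ (1 - (1 - ε) / k) ^ j * OPT := by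
    intro j hj
    induction j with
    | zero => simp [hS0, hempty]
    | succ n ih =>
      have hn : n ≤ k := Nat.le_of_succ_le hj
      have hnk : n < k := hj
      have ihn := ih hn
      have hrec' := hrec n hnk
      have : OPT - f (S (n+1)) ≤ (1 - (1 - ε) / k) * (OPT - f (S n)) := by
        nlinarith
      calc OPT - f (S (n+1)) ≤ (1 - (1 - ε) / k) * (OPT - f (S n)) := this
        _ ≤ (1 - (1 - ε) / k) * ((1 - (1 - ε) / k) ^ n * OPT) := by
            exact mul_le_mul_of_nonneg_left ihn hr0
        _ = (1 - (1 - ε) / k) ^ (n+1) * OPT := by ring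
  have h1 : f (S k) ≥ (1 - (1 - (1 - ε) / k) ^ k) * OPT := by
    have := key k le_rfl
    nlinarith
  -- r^k ≤ exp(-(1-ε))
  have hrk : (1 - (1 - ε) / k) ^ k ≤ Real.exp (-(1 - ε)) := by
    have hstep : 1 - (1 - ε) / k ≤ Real.exp (-((1 - ε) / k)) := by
      linarith [Real.add_one_le_exp (-((1 - ε) / k))]
    calc (1 - (1 - ε) / k) ^ k ≤ Real.exp (-((1 - ε) / k)) ^ k :=
          pow_le_pow_left₀ hr0 hstep k
      _ = Real.exp (-(1 - ε)) := by
          rw [← Real.exp_nat_mul]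
          congr 1
          field_simp
  have h2 : (1 - (1 - (1 - ε) / k) ^ k) * OPT ≥ (1 - Real.exp (-(1 - ε))) * OPT := by
    apply mul_le_mul_of_nonneg_right _ hOPT0
    linarith
  -- exp(-(1-ε)) ≤ 1/e + ε
  have h3 : (1 - Real.exp (-(1 - ε))) * OPT ≥ (1 - 1 / Real.exp 1 - ε) * OPT := by
    apply mul_le_mul_of_nonneg_right _ hOPT0
    have hexp : Real.exp (-(1 - ε)) ≤ 1 / Real.exp 1 + ε := by
      have h1e : Real.exp (-(1:ℝ)) = 1 / Real.exp 1 := by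
        rw [Real.exp_neg]; ring
      have : Real.exp (-(1 - ε)) = Real.exp (-1) * Real.exp ε := by
        rw [← Real.exp_add]; ring_nf
      rw [this, h1e]
      -- need (1/e) * exp ε ≤ 1/e + ε, i.e. (1/e)(exp ε − 1) ≤ ε
      have huv : Real.exp ε * Real.exp (-ε) = 1 := by
        rw [← Real.exp_add]; simp
      have hεe : Real.exp ε - 1 ≤ ε * Real.exp ε := by
        nlinarith [Real.add_one_le_exp (-ε), Real.exp_pos ε, huv]
      have hee : Real.exp ε ≤ Real.exp 1 := Real.exp_le_exp.mpr (le_of_lt hε1)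
      have hepos : (0:ℝ) < Real.exp 1 := Real.exp_pos 1
      have hu : Real.exp ε ≤ 1 + ε * Real.exp 1 := by nlinarith
      calc 1 / Real.exp 1 * Real.exp ε ≤ 1 / Real.exp 1 * (1 + ε * Real.exp 1) :=
            mul_le_mul_of_nonneg_left hu (by positivity)
        _ = 1 / Real.exp 1 + ε := by field_simp
    linarith
  exact ⟨h1, h2, h3⟩
end

section
/- (Descending-threshold greedy, early-termination case.) Let f : 2^E → ℝ≥0 be monotone submodular with f(∅)=0, S* an optimal size-≤k solution with value OPT, ε ∈ (0,1), and S ⊆ E a set such that Δ(e|S) < f(S)·ε/k for every e ∈ S* \ S. Then f(S) ≥ OPT/(1+ε) ≥ (1−ε)·OPT. -/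
lemma submod_union_bound {E : Type*} [DecidableEq E]
    (f : Finset E → ℝ)
    (hmono : ∀ (S : Finset E) (e : E), f S ≤ f (insert e S))
    (hsub : ∀ (S T : Finset E) (e : E), S ⊆ T → e ∉ T →
      f (insert e T) - f T ≤ f (insert e S) - f S)
    (S T : Finset E) :
    f (S ∪ T) ≤ f S + ∑ e ∈ T \ S, (f (insert e S) - f S) := by
  induction T using Finset.induction_on with
  | empty => simp
  | @insert a T ha ih =>
    by_cases haS : a ∈ S
    · have h1 : S ∪ insert a T = S ∪ T := by
        ext x; simp only [Finset.mem_union, Finset.mem_insert]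
        constructor
        · rintro (h | rfl | h) <;> simp_all
        · rintro (h | h) <;> simp_all
      have h2 : insert a T \ S = T \ S := by
        ext x; simp only [Finset.mem_sdiff, Finset.mem_insert]
        constructor
        · rintro ⟨rfl | h, hx⟩ <;> simp_all
        · rintro ⟨h, hx⟩; exact ⟨Or.inr h, hx⟩
      rw [h1, h2]; exact ih
    · have h1 : S ∪ insert a T = insert a (S ∪ T) := by
        ext x; simp [Finset.mem_union, Finset.mem_insert] <;> tauto
      have haST : a ∉ S ∪ T := by simp [haS, ha]
      have hstep : f (insert a (S ∪ T)) - f (S ∪ T) ≤ f (insert a S) - f S :=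
        hsub S (S ∪ T) a (Finset.subset_union_left) haST
      have h2 : insert a T \ S = insert a (T \ S) := by
        ext x; simp only [Finset.mem_sdiff, Finset.mem_insert]
        constructor
        · rintro ⟨rfl | h, hx⟩
          · exact Or.inl rfl
          · exact Or.inr ⟨h, hx⟩
        · rintro (rfl | ⟨h, hx⟩)
          · exact ⟨Or.inl rfl, haS⟩
          · exact ⟨Or.inr h, hx⟩
      have haTS : a ∉ T \ S := by simp [ha]
      rw [h1, h2, Finset.sum_insert haTS]
      linarith

lemma mono_union {E : Type*} [DecidableEq E]
    (f : Finset E → ℝ)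
    (hmono : ∀ (S : Finset E) (e : E), f S ≤ f (insert e S))
    (A B : Finset E) : f A ≤ f (A ∪ B) := by
  induction B using Finset.induction_on with
  | empty => simp
  | @insert a T ha ih =>
    have h : A ∪ insert a T = insert a (A ∪ T) := by
      ext x; simp [Finset.mem_union, Finset.mem_insert] <;> tauto
    rw [h]
    exact le_trans ih (hmono _ a)

/-- Descending-threshold greedy, early-termination case. -/
theorem descending_threshold_early_termination
    {E : Type*} [DecidableEq E]
    (f : Finset E → ℝ) (k : ℕ) (ε OPT : ℝ)
    (hk : 1 ≤ k) (hε : 0 < ε) (hε1 : ε < 1)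
    (hnonneg : ∀ S, 0 ≤ f S)
    (hempty : f ∅ = 0)
    (hmono : ∀ (S : Finset E) (e : E), f S ≤ f (insert e S))
    (hsub : ∀ (S T : Finset E) (e : E), S ⊆ T → e ∉ T →
      f (insert e T) - f T ≤ f (insert e S) - f S)
    (Sstar : Finset E)
    (hSstar_card : Sstar.card ≤ k)
    (hSstar_opt : f Sstar = OPT)
    (hOPT_ub : ∀ T : Finset E, T.card ≤ k → f T ≤ OPT)
    (S : Finset E)
    (hgain : ∀ e ∈ Sstar \ S, f (insert e S) - f S < f S * ε / k) :
    f S ≥ OPT / (1 + ε) ∧ OPT / (1 + ε) ≥ (1 - ε) * OPT := by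
  have hk0 : (0:ℝ) < k := by exact_mod_cast hk
  have hfS : 0 ≤ f S := hnonneg S
  have hOPT0 : 0 ≤ OPT := hSstar_opt ▸ hnonneg Sstar
  have h1ε : (0:ℝ) < 1 + ε := by linarith
  -- f(S*) ≤ f(S ∪ S*) by monotonicity
  have hmono' : f Sstar ≤ f (S ∪ Sstar) := by
    rw [Finset.union_comm]
    exact mono_union f hmono Sstar S
  have hub := submod_union_bound f hmono hsub S Sstar
  -- sum bound
  have hsumle : ∑ e ∈ Sstar \ S, (f (insert e S) - f S) ≤ (Sstar \ S).card * (f S * ε / k) := by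
    calc ∑ e ∈ Sstar \ S, (f (insert e S) - f S)
        ≤ ∑ _e ∈ Sstar \ S, (f S * ε / k) :=
          Finset.sum_le_sum (fun e he => le_of_lt (hgain e he))
      _ = (Sstar \ S).card * (f S * ε / k) := by rw [Finset.sum_const, nsmul_eq_mul]
  have hcard : ((Sstar \ S).card : ℝ) ≤ k := by
    exact_mod_cast le_trans (Finset.card_le_card (Finset.sdiff_subset)) hSstar_card
  have hthr : 0 ≤ f S * ε / k := by positivity
  have hkey : OPT ≤ (1 + ε) * f S := by
    have h2 : ((Sstar \ S).card : ℝ) * (f S * ε / k) ≤ k * (f S * ε / k) :=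
      mul_le_mul_of_nonneg_right hcard hthr
    have h3 : (k:ℝ) * (f S * ε / k) = f S * ε := by field_simp
    have : OPT ≤ f S + f S * ε := by
      rw [← hSstar_opt]
      calc f Sstar ≤ f (S ∪ Sstar) := hmono'
        _ ≤ f S + ∑ e ∈ Sstar \ S, (f (insert e S) - f S) := hub
        _ ≤ f S + ((Sstar \ S).card : ℝ) * (f S * ε / k) := by linarith
        _ ≤ f S + f S * ε := by linarith [h2, h3.le]
    linarith [this]
  constructor
  · rw [ge_iff_le, div_le_iff₀ h1ε]
    linarith [hkey]
  · rw [ge_iff_le, le_div_iff₀ h1ε]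
    nlinarith [hOPT0, sq_nonneg ε]
end
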